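/- arXiv:2512.08357 — 2 statements merged into one kernel-verified Lean document; each statement's English description precedes it below -/
import Mathlib

section
/- The 0-multiple-cover formula is stable under pointwise products: let f, g : ℕ≥1 → ℚ and define F(δ) = ∑_{k | δ} f(k)·T_k and G(δ) = ∑_{l | δ} g(l)·T_l in 𝒢. Then for every δ ≥ 1, F(δ)·G(δ) = ∑_{d | δ} h(d)·T_d, where h(d) = ∑_{k | d} ∑_{l | d, lcm(k,l) = d} f(k)·g(l). -/
/-!
Averaging the basis elements over a finite subgroup `H` of an abelian group gives an element
`e_H` of the group algebra that absorbs every `(θ)` with `θ ∈ H`. Hence `e_H * e_K` is fixed by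
all of `H ⊔ K`, so it is absorbed by `e_{H ⊔ K}`, while absorption on the other side gives
`e_{H ⊔ K} * e_H * e_K = e_{H ⊔ K}`: thus `e_H * e_K = e_{H ⊔ K}`. Now `T_n` is `e_{G[n]}` and, by
Bezout, `G[k] ⊔ G[l] = G[lcm k l]`, so `T_k * T_l = T_{lcm k l}`; the formula follows by
expanding the product and grouping the pairs `(k, l)` of divisors of `δ` by `lcm k l`.
-/

noncomputable section

/-- `G = (ℝ/ℤ)^r`. -/
abbrev Gr (r : ℕ) : Type := Fin r → AddCircle (1 : ℝ)

/-- The group algebra `𝒢 = ℚ[G]`. -/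
abbrev GA (r : ℕ) : Type := AddMonoidAlgebra ℚ (Gr r)

/-- `T_n := n^{-r} • ∑_{τ : n • τ = 0} (τ)`, the average of the `n`-torsion
elements of `G`. -/
noncomputable def Tor (r n : ℕ) : GA r :=
  ((n : ℚ) ^ r)⁻¹ • ∑ᶠ τ ∈ {τ : Gr r | n • τ = 0}, AddMonoidAlgebra.single τ (1 : ℚ)

namespace AddSubgroup

instance instFiniteSup {G : Type*} [AddCommGroup G] (H K : AddSubgroup G) [Finite H] [Finite K] :
    Finite (H ⊔ K : AddSubgroup G) :=
  Set.Finite.to_subtype <| ((Set.toFinite H).add (Set.toFinite K)).subset fun _ hx => by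
    obtain ⟨y, hy, z, hz, rfl⟩ := mem_sup.mp hx
    exact Set.add_mem_add hy hz

end AddSubgroup

namespace AddMonoidAlgebra

variable {k G : Type*} [AddCommGroup G]

section Semiring

variable [Semiring k]

def translationStabilizer (a : AddMonoidAlgebra k G) : AddSubgroup G where
  carrier := {x | single x 1 * a = a}
  zero_mem' := by simp [← one_def]
  add_mem' {x y} hx hy := by
    simp only [Set.mem_ofPred_eq] at *
    rw [← mul_one (1 : k), ← single_mul_single, mul_assoc, hy, hx]
  neg_mem' {x} hx := by
    simp only [Set.mem_ofPred_eq] at *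
    conv_lhs =>
      rw [← hx, ← mul_assoc, single_mul_single, neg_add_cancel, mul_one, ← one_def, one_mul]

@[simp]
lemma mem_translationStabilizer {a : AddMonoidAlgebra k G} {x : G} :
    x ∈ translationStabilizer a ↔ single x 1 * a = a :=
  Iff.rfl

end Semiring

variable (k) [Field k]

def subgroupAverage (H : AddSubgroup G) : AddMonoidAlgebra k G :=
  (Nat.card H : k)⁻¹ • ∑ᶠ x ∈ (H : Set G), single x 1

lemma single_mul_subgroupAverage {H : AddSubgroup G} [Finite H] {x : G} (hx : x ∈ H) :
    single x (1 : k) * subgroupAverage k H = subgroupAverage k H := by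
  rw [subgroupAverage, mul_smul_comm, mul_finsum_mem' _ _ (Set.toFinite _)]
  congr 1
  refine finsum_mem_eq_of_bijOn (x + ·) ⟨fun y hy => H.add_mem hx hy,
    (add_right_injective x).injOn, fun y hy => ⟨-x + y, H.add_mem (H.neg_mem hx) hy, by simp⟩⟩
    fun y _ => by rw [single_mul_single, mul_one]

lemma subgroupAverage_mul_of_le_translationStabilizer [CharZero k] {L : AddSubgroup G} [Finite L]
    {a : AddMonoidAlgebra k G} (ha : L ≤ translationStabilizer a) :
    subgroupAverage k L * a = a := by
  have hL : (Nat.card L : k) ≠ 0 := Nat.cast_ne_zero.mpr Nat.card_pos.ne'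
  rw [subgroupAverage, smul_mul_assoc, finsum_mem_mul' _ _ (Set.toFinite _),
    finsum_mem_congr rfl fun x hx => ha hx, finsum_mem_eq_finite_toFinset_sum _ (Set.toFinite _),
    Finset.sum_const, ← Set.ncard_eq_toFinset_card _, ← Nat.card_coe_set_eq, SetLike.coe_sort_coe,
    ← Nat.cast_smul_eq_nsmul k, smul_smul, inv_mul_cancel₀ hL, one_smul]

lemma le_translationStabilizer_subgroupAverage {H : AddSubgroup G} [Finite H] :
    H ≤ translationStabilizer (subgroupAverage k H) :=
  fun _ hx => mem_translationStabilizer.mpr (single_mul_subgroupAverage k hx)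

lemma subgroupAverage_mul_of_le [CharZero k] {H L : AddSubgroup G} [Finite H] [Finite L]
    (h : H ≤ L) :
    subgroupAverage k H * subgroupAverage k L = subgroupAverage k L :=
  subgroupAverage_mul_of_le_translationStabilizer k
    (h.trans (le_translationStabilizer_subgroupAverage k))

theorem subgroupAverage_mul_subgroupAverage [CharZero k] (H K : AddSubgroup G) [Finite H]
    [Finite K] : subgroupAverage k H * subgroupAverage k K = subgroupAverage k (H ⊔ K) := by
  set e : AddSubgroup G → AddMonoidAlgebra k G := subgroupAverage k
  have hH : H ≤ translationStabilizer (e H * e K) := fun x hx => by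
    rw [mem_translationStabilizer, ← mul_assoc, single_mul_subgroupAverage k hx]
  have hK : K ≤ translationStabilizer (e H * e K) := fun x hx => by
    rw [mem_translationStabilizer, mul_left_comm, single_mul_subgroupAverage k hx]
  calc e H * e K = e (H ⊔ K) * (e H * e K) :=
        (subgroupAverage_mul_of_le_translationStabilizer k (sup_le hH hK)).symm
    _ = e (H ⊔ K) := by
        rw [← mul_assoc, mul_comm (e _), subgroupAverage_mul_of_le k le_sup_left, mul_comm,
          subgroupAverage_mul_of_le k le_sup_right]

end AddMonoidAlgebra

namespace AddSubgroup

variable {A : Type*} [AddCommGroup A]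

lemma coe_torsionBy_natCast (n : ℕ) : (torsionBy A n : Set A) = {x | n • x = 0} :=
  Set.ext fun _ => torsionBy.nsmul_iff

lemma torsionBy_mono {a b : ℕ} (h : a ∣ b) : torsionBy A a ≤ torsionBy A b :=
  Submodule.toAddSubgroup_mono
    (Submodule.torsionBy_le_torsionBy_of_dvd _ _ (Int.natCast_dvd_natCast.mpr h))

theorem torsionBy_sup_torsionBy (k l : ℕ) :
    torsionBy A k ⊔ torsionBy A l = torsionBy A (k.lcm l : ℕ) := by
  refine le_antisymm (sup_le (torsionBy_mono (k.dvd_lcm_left l))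
    (torsionBy_mono (k.dvd_lcm_right l))) fun x hx => ?_
  -- Bezout: with `k = k' g`, `l = l' g` and `u k' + v l' = 1`, `x = v l' • x + u k' • x`.
  obtain ⟨k', l', hco, hk, hl⟩ := Nat.exists_coprime k l
  set g := k.gcd l
  obtain ⟨u, v, huv⟩ := Nat.isCoprime_iff_coprime.mpr hco
  have hlcm : k.lcm l = k' * l' * g := by rw [hk, hl, Nat.lcm_mul_right, hco.lcm_eq_mul]
  have hx' : ((k.lcm l : ℕ) : ℤ) • x = 0 := (Submodule.mem_torsionBy_iff _ _).mp hx
  refine mem_sup.mpr ⟨(v * l') • x, ?_, (u * k') • x, ?_, ?_⟩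
  · refine (Submodule.mem_torsionBy_iff _ _).mpr ?_
    rw [smul_smul, show (k : ℤ) * (v * l') = v * (k.lcm l : ℕ) by rw [hlcm, hk]; push_cast; ring,
      mul_smul, hx', smul_zero]
  · refine (Submodule.mem_torsionBy_iff _ _).mpr ?_
    rw [smul_smul, show (l : ℤ) * (u * k') = u * (k.lcm l : ℕ) by rw [hlcm, hl]; push_cast; ring,
      mul_smul, hx', smul_zero]
  · rw [← add_smul, add_comm, huv, one_smul]

end AddSubgroup

lemma ZMod.range_toAddCircle (n : ℕ) [NeZero n] :
    Set.range (ZMod.toAddCircle : ZMod n → UnitAddCircle) = {x | n • x = 0} := by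
  have hsub : Set.range (ZMod.toAddCircle : ZMod n → UnitAddCircle) ⊆ {x | n • x = 0} := by
    rintro _ ⟨j, rfl⟩
    rw [Set.mem_ofPred_eq, ← map_nsmul, nsmul_eq_mul, ZMod.natCast_self, zero_mul, map_zero]
  refine (Set.finite_range _).eq_of_subset_of_encard_le hsub ?_
  calc {x : UnitAddCircle | n • x = 0}.encard
      ≤ n := AddCircle.card_torsion_le_of_isSMulRegular _ n (NeZero.ne n)
          (.of_right_eq_zero_of_smul fun _ ↦ by simp [NeZero.ne n])
    _ = ENat.card (ZMod n) := by rw [ENat.card_eq_coe_natCard, Nat.card_zmod]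
    _ ≤ _ := (ZMod.toAddCircle_injective n).encard_range

lemma UnitAddCircle.card_torsion (n : ℕ) [NeZero n] :
    Nat.card {x : UnitAddCircle | n • x = 0} = n := by
  rw [← ZMod.range_toAddCircle, Nat.card_range_of_injective (ZMod.toAddCircle_injective n),
    Nat.card_zmod]

lemma UnitAddTorus.card_torsion (d : Type*) [Fintype d] (n : ℕ) [NeZero n] :
    Nat.card {x : UnitAddTorus d | n • x = 0} = n ^ Fintype.card d := by
  have : {x : UnitAddTorus d | n • x = 0} = Set.univ.pi fun _ => {x | n • x = 0} := by
    ext x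
    simp [funext_iff]
  rw [this, Nat.card_congr (Equiv.Set.univPi _), Nat.card_pi, Finset.prod_const, Finset.card_univ,
    UnitAddCircle.card_torsion]

open AddSubgroup AddMonoidAlgebra

lemma Gr.card_torsionBy (r n : ℕ) [NeZero n] : Nat.card (torsionBy (Gr r) n) = n ^ r := by
  rw [← SetLike.coe_sort_coe, coe_torsionBy_natCast, UnitAddTorus.card_torsion, Fintype.card_fin]

lemma Tor_eq_subgroupAverage (r : ℕ) {n : ℕ} (hn : n ≠ 0) :
    Tor r n = subgroupAverage ℚ (torsionBy (Gr r) n) := by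
  have := NeZero.mk hn
  rw [Tor, subgroupAverage, Gr.card_torsionBy, coe_torsionBy_natCast, Nat.cast_pow]

lemma Tor_mul_Tor (r : ℕ) {k l : ℕ} (hk : k ≠ 0) (hl : l ≠ 0) :
    Tor r k * Tor r l = Tor r (k.lcm l) := by
  have finite_torsionBy (n : ℕ) (hn : n ≠ 0) : Finite (torsionBy (Gr r) n) :=
    have := NeZero.mk hn
    Nat.finite_of_card_ne_zero (by rw [Gr.card_torsionBy]; exact pow_ne_zero _ hn)
  have := finite_torsionBy k hk
  have := finite_torsionBy l hl
  rw [Tor_eq_subgroupAverage r hk, Tor_eq_subgroupAverage r hl,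
    Tor_eq_subgroupAverage r (Nat.lcm_ne_zero hk hl), subgroupAverage_mul_subgroupAverage,
    torsionBy_sup_torsionBy]

theorem Nat.sum_divisors_sum_divisors_eq_sum_divisors_lcm {M : Type*} [AddCommMonoid M] (δ : ℕ)
    (φ : ℕ → ℕ → M) :
    ∑ k ∈ δ.divisors, ∑ l ∈ δ.divisors, φ k l =
      ∑ d ∈ δ.divisors, ∑ k ∈ d.divisors, ∑ l ∈ d.divisors.filter (fun l => k.lcm l = d),
        φ k l := by
  have hmaps : ∀ p ∈ δ.divisors ×ˢ δ.divisors, p.1.lcm p.2 ∈ δ.divisors := by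
    simp only [Finset.mem_product, Nat.mem_divisors]
    rintro ⟨k, l⟩ ⟨⟨hk, hδ⟩, hl, -⟩
    exact ⟨Nat.lcm_dvd hk hl, hδ⟩
  have hfiber : ∀ d ∈ δ.divisors, (δ.divisors ×ˢ δ.divisors).filter (fun p => p.1.lcm p.2 = d) =
      (d.divisors ×ˢ d.divisors).filter (fun p => p.1.lcm p.2 = d) := by
    intro d hd
    obtain ⟨hdδ, hδ⟩ := Nat.mem_divisors.mp hd
    have hd0 : d ≠ 0 := ne_zero_of_dvd_ne_zero hδ hdδ
    ext ⟨k, l⟩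
    simp only [Finset.mem_filter, Finset.mem_product, Nat.mem_divisors]
    constructor
    · rintro ⟨-, rfl⟩
      exact ⟨⟨⟨Nat.dvd_lcm_left k l, hd0⟩, Nat.dvd_lcm_right k l, hd0⟩, rfl⟩
    · rintro ⟨⟨⟨hk, -⟩, hl, -⟩, rfl⟩
      exact ⟨⟨⟨hk.trans hdδ, hδ⟩, hl.trans hdδ, hδ⟩, rfl⟩
  rw [← Finset.sum_product', ← Finset.sum_fiberwise_of_maps_to hmaps]
  refine Finset.sum_congr rfl fun d hd => ?_
  rw [hfiber d hd, Finset.sum_filter, Finset.sum_product]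
  simp only [Finset.sum_filter]

theorem statement7_general (r : ℕ) (f g : ℕ → ℚ) (δ : ℕ) :
    (∑ k ∈ δ.divisors, f k • Tor r k) * (∑ l ∈ δ.divisors, g l • Tor r l) =
      ∑ d ∈ δ.divisors,
        (∑ k ∈ d.divisors, ∑ l ∈ d.divisors.filter (fun l => Nat.lcm k l = d),
          f k * g l) • Tor r d := by
  rw [Finset.sum_mul_sum, Nat.sum_divisors_sum_divisors_eq_sum_divisors_lcm]
  refine Finset.sum_congr rfl fun d _ => ?_
  simp only [Finset.sum_smul]
  refine Finset.sum_congr rfl fun k hk => Finset.sum_congr rfl fun l hl => ?_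
  obtain ⟨hl, hkl⟩ := Finset.mem_filter.mp hl
  rw [smul_mul_smul_comm, Tor_mul_Tor r (Nat.pos_of_mem_divisors hk).ne'
    (Nat.pos_of_mem_divisors hl).ne', hkl]

/-- The 0-multiple-cover formula is stable under pointwise products:
if `F(δ) = ∑_{k ∣ δ} f(k) • T_k` and `G(δ) = ∑_{l ∣ δ} g(l) • T_l` then
`F(δ)·G(δ) = ∑_{d ∣ δ} (∑_{k ∣ d} ∑_{l ∣ d, lcm(k,l) = d} f(k)·g(l)) • T_d`. -/
theorem statement7 (r : ℕ) (hr : 1 ≤ r) (f g : ℕ → ℚ) (δ : ℕ) (hδ : 1 ≤ δ) :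
    (∑ k ∈ δ.divisors, f k • Tor r k) * (∑ l ∈ δ.divisors, g l • Tor r l) =
      ∑ d ∈ δ.divisors,
        (∑ k ∈ d.divisors, ∑ l ∈ d.divisors.filter (fun l => Nat.lcm k l = d),
          f k * g l) • Tor r d :=
  statement7_general r f g δ

end
end

section
/- Closed formula for the Möbius-twisted refined count of pairs with cyclic cotype: for every n ≥ 1 and every divisor d of n, ∑_{K ≤ Z_n²} ∑_{H ≤ K, Z_n²/H cyclic of order d} μ(H,K) · T_K = ∑_{k | d} μ(k) · T_{(n/d)·k} in ℚ[Z_n²], where the outer sum runs over all additive subgroups K of Z_n², the inner sum over all additive subgroups H of K such that the quotient Z_n²/H is cyclic of order d, and μ(k) on the right-hand side is the number-theoretic Möbius function. -/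
/-!
Evaluate both sides at every complex character `ψ` of `Z_n²`: characters separate the elements
of `ℚ[Z_n²]`, and `ψ` sends `T_K` to `1` if `K ≤ ker ψ` and to `0` otherwise. On the left, the
coefficient of each `H` becomes `∑_{H ≤ K ≤ ker ψ} μ(H,K)`, which by Möbius inversion in the
subgroup lattice is `1` exactly when `H = ker ψ`; since `Z_n²/ker ψ` is cyclic of order `ord ψ`,
the left side becomes `[ord ψ = d]`. On the right, the `(n/d)k`-torsion subgroup is `(d/k)·Z_n²`,
which lies in `ker ψ` iff `ord ψ ∣ d/k`, and number-theoretic Möbius inversion turns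
`∑_{k ∣ d} μ(k)·[ord ψ ∣ d/k]` into `[ord ψ = d]`.
-/

noncomputable section

/-- `T_K := |K|⁻¹ • ∑_{θ ∈ K} (θ)` in the group algebra `ℚ[Z_n²]`. -/
noncomputable def TK (n : ℕ) (K : AddSubgroup (ZMod n × ZMod n)) :
    AddMonoidAlgebra ℚ (ZMod n × ZMod n) :=
  (Nat.card K : ℚ)⁻¹ •
    ∑ᶠ θ ∈ (K : Set (ZMod n × ZMod n)), AddMonoidAlgebra.single θ (1 : ℚ)

/-- The `k`-torsion subgroup `{x ∈ Z_n² : k • x = 0}`. -/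
def torsionSub (n k : ℕ) : AddSubgroup (ZMod n × ZMod n) where
  carrier := {x | k • x = 0}
  zero_mem' := smul_zero k
  add_mem' := by
    intro a b ha hb
    simp only [Set.mem_setOf_eq, smul_add] at *
    rw [ha, hb, add_zero]
  neg_mem' := by
    intro a ha
    simp only [Set.mem_setOf_eq, smul_neg] at *
    rw [ha, neg_zero]

/-- `T_k := T_K` for `K` the `k`-torsion subgroup of `Z_n²`. -/
noncomputable def Tk (n k : ℕ) : AddMonoidAlgebra ℚ (ZMod n × ZMod n) :=
  TK n (torsionSub n k)

open Finset

namespace IncidenceAlgebra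

variable {𝕜 α : Type*} [Ring 𝕜] [PartialOrder α] [LocallyFiniteOrder α] [DecidableEq α]
  {μ : α → α → 𝕜}

theorem eq_mu_of_sum_Icc_eq_zero (h₁ : ∀ a, μ a a = 1)
    (h₂ : ∀ a b, a < b → ∑ x ∈ Icc a b, μ x b = 0) (a b : α) (hab : a ≤ b) :
    μ a b = mu 𝕜 a b := by
  obtain rfl | hlt := hab.eq_or_lt
  · simp [h₁]
  have hrec : ∀ x ∈ Ioc a b, μ x b = mu 𝕜 x b := fun x hx ↦
    have : #(Icc x b) < #(Icc a b) :=
      card_lt_card (Icc_ssubset_Icc_left hab (mem_Ioc.1 hx).1 le_rfl)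
    eq_mu_of_sum_Icc_eq_zero h₁ h₂ x b (mem_Ioc.1 hx).2
  rw [mu_eq_neg_sum_Ioc_of_ne hlt.ne, ← sum_congr rfl hrec, eq_neg_iff_add_eq_zero, add_comm,
    sum_Ioc_add_eq_sum_Icc hab, h₂ a b hlt]
termination_by #(Icc a b)

theorem sum_Icc_eq_ite_of_sum_Icc_eq_zero (h₁ : ∀ a, μ a a = 1)
    (h₂ : ∀ a b, a < b → ∑ x ∈ Icc a b, μ x b = 0) (a b : α) :
    ∑ x ∈ Icc a b, μ a x = if a = b then 1 else 0 := by
  rw [← sum_Icc_mu_right, sum_congr rfl fun x hx ↦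
    eq_mu_of_sum_Icc_eq_zero h₁ h₂ a x (mem_Icc.1 hx).1]

end IncidenceAlgebra

theorem ArithmeticFunction.sum_divisors_moebius_mul_ite_dvd {R : Type*} [Ring R] {d : ℕ}
    (hd : 0 < d) (a : ℕ) :
    ∑ k ∈ d.divisors, (moebius k : R) * (if a ∣ d / k then 1 else 0) =
      if d = a then 1 else 0 := by
  rw [← Nat.sum_divisorsAntidiagonal fun k l ↦ (moebius k : R) * if a ∣ l then 1 else 0]
  refine sum_eq_iff_sum_mul_moebius_eq (f := fun m ↦ if m = a then (1 : R) else 0)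
    (g := fun m ↦ if a ∣ m then 1 else 0) |>.1 (fun m hm ↦ ?_) d hd
  simp [sum_ite_eq', Nat.mem_divisors, hm.ne']

namespace AddChar

section Kernel

variable {G M : Type*} [AddGroup G] [Monoid M]

def ker (ψ : AddChar G M) : AddSubgroup G := ψ.toAddMonoidHom.ker

@[simp] theorem mem_ker {ψ : AddChar G M} {x : G} : x ∈ ψ.ker ↔ ψ x = 1 := Iff.rfl

end Kernel

variable {G : Type*} [AddCommGroup G]

theorem exponent_quotient_ker {M : Type*} [CommMonoid M] (ψ : AddChar G M) :
    AddMonoid.exponent (G ⧸ ψ.ker) = orderOf ψ := by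
  have key : ∀ m : ℕ, (∀ q : G ⧸ ψ.ker, m • q = 0) ↔ ψ ^ m = 1 := fun m ↦ by
    simp [QuotientAddGroup.mk_surjective.forall, ← QuotientAddGroup.mk_nsmul,
      AddChar.ext_iff, map_nsmul_eq_pow]
  apply Nat.dvd_antisymm
  · rw [AddMonoid.exponent_dvd_iff_forall_nsmul_eq_zero, key]
    exact pow_orderOf_eq_one ψ
  · rw [orderOf_dvd_iff_pow_eq_one, ← key]
    exact AddMonoid.exponent_nsmul_eq_zero

theorem isAddCyclic_quotient_ker {R : Type*} [CommRing R] [IsDomain R] [Finite G]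
    (ψ : AddChar G R) : IsAddCyclic (G ⧸ ψ.ker) := by
  let f : G ⧸ ψ.ker →+ Additive R := QuotientAddGroup.lift ψ.ker ψ.toAddMonoidHom le_rfl
  have hf : Function.Injective f := by
    intro p q h
    obtain ⟨a, rfl⟩ := QuotientAddGroup.mk_surjective p
    obtain ⟨b, rfl⟩ := QuotientAddGroup.mk_surjective q
    rw [QuotientAddGroup.eq, mem_ker, map_add_eq_mul]
    change ψ a = ψ b at h
    rw [← h, ← map_add_eq_mul, neg_add_cancel, map_zero_eq_one]
  exact isCyclic_multiplicative_iff.1 <|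
    isCyclic_of_injective_ringHom (AddMonoidHom.toMultiplicativeLeft f) hf

theorem nonempty_quotient_ker_addEquiv_zmod_iff {R : Type*} [CommRing R] [IsDomain R]
    [Finite G] (ψ : AddChar G R) (d : ℕ) :
    Nonempty ((G ⧸ ψ.ker) ≃+ ZMod d) ↔ orderOf ψ = d := by
  have := isAddCyclic_quotient_ker ψ
  rw [← exponent_quotient_ker, IsAddCyclic.exponent_eq_card]
  refine ⟨fun ⟨e⟩ ↦ (Nat.card_congr e.toEquiv).trans (Nat.card_zmod d), fun h ↦ ?_⟩
  exact ⟨h ▸ (zmodAddCyclicAddEquiv this).symm⟩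

open scoped Classical in
theorem finsum_mem_eq_ite [Finite G] (ψ : AddChar G ℂ) (K : AddSubgroup G) :
    ∑ᶠ θ ∈ (K : Set G), ψ θ = if K ≤ ψ.ker then (Nat.card K : ℂ) else 0 := by
  have := Fintype.ofFinite K
  have hzero : ψ.compAddMonoidHom K.subtype = 0 ↔ K ≤ ψ.ker := by
    simp [AddChar.ext_iff, SetLike.le_def]
  rw [← finsum_set_coe_eq_finsum_mem, finsum_eq_sum_of_fintype, Nat.card_eq_fintype_card,
    ← if_congr hzero rfl rfl, ← sum_eq_ite]
  exact Fintype.sum_equiv (Equiv.refl _) _ _ fun _ ↦ rfl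

section LiftAlgHom

variable {k : Type*} [CommSemiring k] [Algebra k ℂ]

def liftAlgHom (ψ : AddChar G ℂ) : AddMonoidAlgebra k G →ₐ[k] ℂ :=
  AddMonoidAlgebra.lift k ℂ G ψ.toMonoidHom

@[simp] theorem liftAlgHom_single (ψ : AddChar G ℂ) (θ : G) (r : k) :
    ψ.liftAlgHom (AddMonoidAlgebra.single θ r) = r • ψ θ :=
  AddMonoidAlgebra.lift_single _ _ _

theorem liftAlgHom_apply [Fintype G] (ψ : AddChar G ℂ) (f : AddMonoidAlgebra k G) :
    ψ.liftAlgHom f = ∑ θ, f.coeff θ • ψ θ := by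
  rw [liftAlgHom, AddMonoidAlgebra.lift_apply, Finsupp.sum_fintype _ _ (by simp)]
  rfl

end LiftAlgHom

theorem eq_of_forall_liftAlgHom_eq {k : Type*} [Field k] [Algebra k ℂ] [Finite G]
    {f g : AddMonoidAlgebra k G} (h : ∀ ψ : AddChar G ℂ, ψ.liftAlgHom f = ψ.liftAlgHom g) :
    f = g := by
  have := Fintype.ofFinite G
  have hlin : LinearIndependent ℂ fun (θ : G) (ψ : AddChar G ℂ) ↦ ψ θ :=
    (AddChar.linearIndependent (AddChar G ℂ) ℂ).comp _ doubleDualEmb_injective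
  have hcoeff := Fintype.linearIndependent_iff.1 hlin
    (fun θ ↦ algebraMap k ℂ (f.coeff θ - g.coeff θ)) <| funext fun ψ ↦ by
      simpa [liftAlgHom_apply, sub_mul, Algebra.smul_def] using sub_eq_zero.2 (h ψ)
  ext θ
  simpa [sub_eq_zero] using hcoeff θ

end AddChar

theorem ZMod.nsmul_eq_zero_iff_exists_nsmul_eq {n a r : ℕ} [NeZero n] (h : a * r = n)
    (t : ZMod n) : a • t = 0 ↔ ∃ s : ZMod n, r • s = t := by
  constructor
  · intro ht
    have ha : 0 < a := Nat.pos_of_ne_zero fun ha ↦ NeZero.ne n (by rw [← h, ha, zero_mul])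
    have hdvd : a * r ∣ a * t.val := by
      rw [h, ← ZMod.natCast_eq_zero_iff, Nat.cast_mul, ZMod.natCast_zmod_val, ← nsmul_eq_mul, ht]
    obtain ⟨c, hc⟩ := Nat.dvd_of_mul_dvd_mul_left ha hdvd
    exact ⟨c, by rw [nsmul_eq_mul, ← Nat.cast_mul, ← hc, ZMod.natCast_zmod_val]⟩
  · rintro ⟨s, rfl⟩
    rw [smul_smul, h, nsmul_eq_mul, ZMod.natCast_self, zero_mul]

section ZModSq

variable {n : ℕ} [NeZero n]

theorem mem_torsionSub_iff_exists_nsmul_eq {a r : ℕ} (h : a * r = n) (x : ZMod n × ZMod n) :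
    x ∈ torsionSub n a ↔ ∃ y, r • y = x := by
  change a • x = 0 ↔ _
  rw [Prod.ext_iff, Prod.smul_fst, Prod.smul_snd, Prod.fst_zero, Prod.snd_zero,
    ZMod.nsmul_eq_zero_iff_exists_nsmul_eq h, ZMod.nsmul_eq_zero_iff_exists_nsmul_eq h]
  constructor
  · rintro ⟨⟨s, hs⟩, ⟨t, ht⟩⟩
    exact ⟨(s, t), Prod.ext hs ht⟩
  · rintro ⟨y, rfl⟩
    exact ⟨⟨y.1, rfl⟩, ⟨y.2, rfl⟩⟩

theorem torsionSub_le_ker_iff {M : Type*} [CommMonoid M] {a r : ℕ} (h : a * r = n)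
    (ψ : AddChar (ZMod n × ZMod n) M) : torsionSub n a ≤ ψ.ker ↔ orderOf ψ ∣ r := by
  rw [orderOf_dvd_iff_pow_eq_one, AddChar.ext_iff, SetLike.le_def]
  simp only [mem_torsionSub_iff_exists_nsmul_eq h, AddChar.mem_ker, forall_exists_index,
    forall_apply_eq_imp_iff, AddChar.pow_apply, AddChar.one_apply, AddChar.map_nsmul_eq_pow]

open scoped Classical in
theorem liftAlgHom_TK (ψ : AddChar (ZMod n × ZMod n) ℂ) (K : AddSubgroup (ZMod n × ZMod n)) :
    ψ.liftAlgHom (TK n K) = if K ≤ ψ.ker then 1 else 0 := by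
  rw [TK, map_smul, ← AddMonoidHom.coe_coe, AddMonoidHom.map_finsum_mem _ _ (Set.toFinite _)]
  simp only [AddMonoidHom.coe_coe, AddChar.liftAlgHom_single, one_smul,
    AddChar.finsum_mem_eq_ite]
  split_ifs <;> simp [Rat.smul_def]

open scoped Classical in
theorem liftAlgHom_finsum_moebius_smul_TK (ψ : AddChar (ZMod n × ZMod n) ℂ)
    (μ : AddSubgroup (ZMod n × ZMod n) → AddSubgroup (ZMod n × ZMod n) → ℤ)
    (hμ₁ : ∀ H, μ H H = 1)
    (hμ₂ : ∀ H K : AddSubgroup (ZMod n × ZMod n), H < K →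
      (∑ᶠ L ∈ {L : AddSubgroup (ZMod n × ZMod n) | H ≤ L ∧ L ≤ K}, μ L K) = 0)
    (P : AddSubgroup (ZMod n × ZMod n) → Prop) :
    ψ.liftAlgHom (∑ᶠ K, ∑ᶠ H ∈ {H | H ≤ K ∧ P H}, (μ H K : ℚ) • TK n K) =
      if P ψ.ker then 1 else 0 := by
  let _ := Fintype.ofFinite (AddSubgroup (ZMod n × ZMod n))
  let _ : LocallyFiniteOrder (AddSubgroup (ZMod n × ZMod n)) := Fintype.toLocallyFiniteOrder
  have hδ (H) : ∑ K ∈ Icc H ψ.ker, μ H K = if H = ψ.ker then 1 else 0 := by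
    refine IncidenceAlgebra.sum_Icc_eq_ite_of_sum_Icc_eq_zero hμ₁ (fun H K h ↦ ?_) H ψ.ker
    rw [← hμ₂ H K h, ← finsum_mem_coe_finset, coe_Icc]
    rfl
  calc _ = ∑ K, ∑ H ∈ {H | H ≤ K ∧ P H}.toFinset, if K ≤ ψ.ker then (μ H K : ℂ) else 0 := by
        rw [finsum_eq_sum_of_fintype, map_sum]
        refine sum_congr rfl fun K _ ↦ ?_
        rw [finsum_mem_eq_toFinset_sum, map_sum]
        refine sum_congr rfl fun H _ ↦ ?_
        rw [map_smul, liftAlgHom_TK]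
        split_ifs <;> simp
    _ = ∑ H with P H, ((∑ K ∈ Icc H ψ.ker, μ H K : ℤ) : ℂ) := by
        rw [sum_comm' (t' := {H | P H}) (s' := fun H ↦ {K | H ≤ K})]
        · refine sum_congr rfl fun H _ ↦ ?_
          rw [sum_ite, sum_const_zero, add_zero, filter_filter, Int.cast_sum]
          congr 1
          ext K
          simp
        · simp [and_comm]
    _ = if P ψ.ker then 1 else 0 := by simp [hδ]

end ZModSq

/-- Closed formula for the Möbius-twisted refined count of pairs with cyclic
cotype: for `d ∣ n` and `μ` the Möbius function of the lattice of additive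
subgroups of `Z_n²` (characterized by `μ(H,H) = 1` and
`∑_{L : H ≤ L ≤ K} μ(L,K) = 0` for `H` a proper subgroup of `K`),
`∑_{K} ∑_{H ≤ K, Z_n²/H cyclic of order d} μ(H,K) • T_K
  = ∑_{k ∣ d} μ(k) • T_{(n/d)·k}`, where `μ(k)` on the right-hand side is the
number-theoretic Möbius function. -/
theorem statement16 (n d : ℕ) (hn : 1 ≤ n) (hd : d ∣ n)
    (μ : AddSubgroup (ZMod n × ZMod n) → AddSubgroup (ZMod n × ZMod n) → ℤ)
    (hμ₁ : ∀ H, μ H H = 1)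
    (hμ₂ : ∀ H K : AddSubgroup (ZMod n × ZMod n), H < K →
      (∑ᶠ L ∈ {L : AddSubgroup (ZMod n × ZMod n) | H ≤ L ∧ L ≤ K}, μ L K) = 0) :
    (∑ᶠ K : AddSubgroup (ZMod n × ZMod n),
      ∑ᶠ H ∈ {H : AddSubgroup (ZMod n × ZMod n) |
          H ≤ K ∧ Nonempty (((ZMod n × ZMod n) ⧸ H) ≃+ ZMod d)},
        (μ H K : ℚ) • TK n K) =
      ∑ k ∈ d.divisors,
        ((ArithmeticFunction.moebius k : ℤ) : ℚ) • Tk n ((n / d) * k) := by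
  classical
  have : NeZero n := ⟨by omega⟩
  refine AddChar.eq_of_forall_liftAlgHom_eq fun ψ ↦ ?_
  have hterm : ∀ k ∈ d.divisors, ψ.liftAlgHom (((ArithmeticFunction.moebius k : ℤ) : ℚ) •
      Tk n (n / d * k)) = (ArithmeticFunction.moebius k : ℂ) *
        if orderOf ψ ∣ d / k then 1 else 0 := fun k hk ↦ by
    have hsplit : n / d * k * (d / k) = n := by
      rw [mul_assoc, Nat.mul_div_cancel' (Nat.dvd_of_mem_divisors hk), Nat.div_mul_cancel hd]
    rw [map_smul, Tk, liftAlgHom_TK, if_congr (torsionSub_le_ker_iff hsplit ψ) rfl rfl]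
    simp [Rat.smul_def]
  rw [liftAlgHom_finsum_moebius_smul_TK ψ μ hμ₁ hμ₂, map_sum, sum_congr rfl hterm,
    ArithmeticFunction.sum_divisors_moebius_mul_ite_dvd (Nat.pos_of_dvd_of_pos hd hn),
    if_congr (AddChar.nonempty_quotient_ker_addEquiv_zmod_iff ψ d) rfl rfl]
  simp [eq_comm]

end
end
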